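/- Fix n ≥ 1, an integer k with 0 ≤ k ≤ n−1, and (p,q) ∈ ℂ² with (p,q) ≠ (0,0). Then the preimage under σ of the ideal ⟨p·x^{2k+1} − q·y^{2n−2k−1}, xy, x^{2k+2}, y^{2n−2k}⟩ of ℂ[x,y] is the ideal ⟨a^{k+1}, b^{n−k}, c, ab⟩ of ℂ[a,b,c]; in particular it does not depend on (p,q). -/

import Mathlib

/-!
Every generator of `I = ⟨p x^(2k+1) - q y^(2n-2k-1), xy, x^(2k+2), y^(2n-2k)⟩` lies in the
monomial ideal `J = ⟨x^(2k+1), y^(2n-2k-1), xy⟩`. A polynomial `f` lies outside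
`⟨a^(k+1), b^(n-k), c, ab⟩` only if it has a nonzero coefficient at some `a^i` with `i ≤ k` or
`b^j` with `j < n - k`. No other monomial is sent by `σ` to `x^(2i)` resp. `y^(2j)`, so `σ f` has
the same nonzero coefficient there, which no element of `J` has; hence `σ⁻¹(I) ⊆ σ⁻¹(J)` is
contained in `⟨a^(k+1), b^(n-k), c, ab⟩`. The reverse inclusion is checked on generators:
`σ(a^(k+1)) = x^(2k+2)`, `σ(b^(n-k)) = y^(2n-2k)`, `σ(c) = xy`, `σ(ab) = (xy)^2`.
-/

open MvPolynomial

/-- The ℂ-algebra homomorphism `σ : ℂ[a,b,c] → ℂ[x,y]` with `σ(a)=x²`, `σ(b)=y²`,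
`σ(c)=xy`. -/
noncomputable def sigmaHom : MvPolynomial (Fin 3) ℂ →ₐ[ℂ] MvPolynomial (Fin 2) ℂ :=
  aeval ![X 0 ^ 2, X 1 ^ 2, X 0 * X 1]

open Finsupp (single)

theorem X_mul_X_eq_monomial {R ι : Type*} [CommSemiring R] (i j : ι) :
    (X i * X j : MvPolynomial ι R) = monomial (single i 1 + single j 1) 1 := by
  rw [X, X, monomial_mul, one_mul]

theorem coeff_eq_zero_of_mem_span_X_pow_X_pow_X_mul_X {R : Type*} [CommSemiring R] {a b : ℕ}
    {g : MvPolynomial (Fin 2) R}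
    (hg : g ∈ Ideal.span {X 0 ^ (a + 1), X 1 ^ (b + 1), X 0 * X 1}) {m : Fin 2 →₀ ℕ}
    (ha : m 0 ≤ a) (hb : m 1 ≤ b) (hm : m 0 = 0 ∨ m 1 = 0) : coeff m g = 0 := by
  have hS : ({X 0 ^ (a + 1), X 1 ^ (b + 1), X 0 * X 1} : Set (MvPolynomial (Fin 2) R)) =
      (monomial · 1) '' {single 0 (a + 1), single 1 (b + 1), single 0 1 + single 1 1} := by
    simp only [Set.image_insert_eq, Set.image_singleton, X_pow_eq_monomial, X_mul_X_eq_monomial]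
  rw [hS, mem_ideal_span_monomial_image] at hg
  by_contra hne
  obtain ⟨s, hs, hsm⟩ := hg m (mem_support_iff.mpr hne)
  simp only [Set.mem_insert_iff, Set.mem_singleton_iff] at hs
  have h0 := hsm 0
  have h1 := hsm 1
  rcases hs with rfl | rfl | rfl <;>
    simp only [Finsupp.coe_add, Pi.add_apply, Finsupp.single_eq_same, ne_eq, zero_ne_one,
      one_ne_zero, not_false_eq_true, Finsupp.single_eq_of_ne, add_zero, zero_add] at h0 h1 <;>
    omega

theorem mem_span_X_pow_X_pow_X_X_mul_X_of_coeff_eq_zero {R : Type*} [CommSemiring R] {a b : ℕ}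
    {f : MvPolynomial (Fin 3) R}
    (hf : ∀ m : Fin 3 →₀ ℕ, m 0 ≤ a → m 1 ≤ b → m 2 = 0 → (m 0 = 0 ∨ m 1 = 0) → coeff m f = 0) :
    f ∈ Ideal.span {X 0 ^ (a + 1), X 1 ^ (b + 1), X 2, X 0 * X 1} := by
  have hS : ({X 0 ^ (a + 1), X 1 ^ (b + 1), X 2, X 0 * X 1} : Set (MvPolynomial (Fin 3) R)) =
      (monomial · 1) ''
        {single 0 (a + 1), single 1 (b + 1), single 2 1, single 0 1 + single 1 1} := by
    simp only [Set.image_insert_eq, Set.image_singleton, X_pow_eq_monomial, X_mul_X_eq_monomial]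
    rfl
  rw [hS, mem_ideal_span_monomial_image]
  intro m hm
  by_contra! hnone
  simp only [Set.mem_insert_iff, Set.mem_singleton_iff, forall_eq_or_imp, forall_eq,
    Finsupp.single_le_iff, not_le] at hnone
  obtain ⟨ha, hb, hc, hab⟩ := hnone
  refine mem_support_iff.mp hm (hf m (by omega) (by omega) (by omega) ?_)
  by_contra! h
  exact hab fun i => by
    fin_cases i <;>
      simp only [Fin.zero_eta, Fin.mk_one, Fin.reduceFinMk, Fin.reduceEq, Finsupp.coe_add,
        Pi.add_apply, Finsupp.single_eq_same, ne_eq, zero_ne_one, one_ne_zero, not_false_eq_true,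
        Finsupp.single_eq_of_ne, add_zero, zero_add] <;>
      omega

theorem span_le_span_X_pow_X_pow_X_mul_X {R : Type*} [CommRing R] (p q : R) (a b : ℕ) :
    Ideal.span ({C p * X 0 ^ (2 * a + 1) - C q * X 1 ^ (2 * b + 1), X 0 * X 1,
        X 0 ^ (2 * a + 2), X 1 ^ (2 * b + 2)} : Set (MvPolynomial (Fin 2) R)) ≤
      Ideal.span ({X 0 ^ (2 * a + 1), X 1 ^ (2 * b + 1), X 0 * X 1} :
        Set (MvPolynomial (Fin 2) R)) := by
  have hx : X 0 ^ (2 * a + 1) ∈ Ideal.span ({X 0 ^ (2 * a + 1), X 1 ^ (2 * b + 1), X 0 * X 1} :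
      Set (MvPolynomial (Fin 2) R)) := Ideal.subset_span (by simp)
  have hy : X 1 ^ (2 * b + 1) ∈ Ideal.span ({X 0 ^ (2 * a + 1), X 1 ^ (2 * b + 1), X 0 * X 1} :
      Set (MvPolynomial (Fin 2) R)) := Ideal.subset_span (by simp)
  simp only [Ideal.span_le, Set.insert_subset_iff, Set.singleton_subset_iff, SetLike.mem_coe]
  refine ⟨?_, Ideal.subset_span (by simp), ?_, ?_⟩
  · exact sub_mem (Ideal.mul_mem_left _ _ hx) (Ideal.mul_mem_left _ _ hy)
  · simpa [pow_succ'] using Ideal.mul_mem_left _ (X 0) hx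
  · simpa [pow_succ'] using Ideal.mul_mem_left _ (X 1) hy

noncomputable def sigmaExponent (s : Fin 3 →₀ ℕ) : Fin 2 →₀ ℕ :=
  single 0 (2 * s 0 + s 2) + single 1 (2 * s 1 + s 2)

@[simp]
theorem sigmaExponent_apply_zero (s : Fin 3 →₀ ℕ) : sigmaExponent s 0 = 2 * s 0 + s 2 := by
  simp [sigmaExponent]

@[simp]
theorem sigmaExponent_apply_one (s : Fin 3 →₀ ℕ) : sigmaExponent s 1 = 2 * s 1 + s 2 := by
  simp [sigmaExponent]

theorem sigmaHom_X (i : Fin 3) : sigmaHom (X i) = ![X 0 ^ 2, X 1 ^ 2, X 0 * X 1] i :=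
  aeval_X _ _

theorem sigmaHom_monomial (s : Fin 3 →₀ ℕ) (r : ℂ) :
    sigmaHom (monomial s r) = monomial (sigmaExponent s) r := by
  rw [sigmaHom, aeval_monomial, Finsupp.prod_fintype _ _ fun _ => pow_zero _, Fin.prod_univ_three,
    sigmaExponent, monomial_add_single, ← C_mul_X_pow_eq_monomial, algebraMap_eq]
  simp only [Matrix.cons_val_zero, Matrix.cons_val_one, Matrix.cons_val_two, Matrix.tail_cons,
    Matrix.head_cons]
  ring

theorem coeff_sigmaExponent_sigmaHom {m : Fin 3 →₀ ℕ}
    (hm : ∀ v, sigmaExponent v = sigmaExponent m → v = m) (f : MvPolynomial (Fin 3) ℂ) :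
    coeff (sigmaExponent m) (sigmaHom f) = coeff m f := by
  conv_lhs => rw [f.as_sum, map_sum]
  simp only [coeff_sum, sigmaHom_monomial, coeff_monomial]
  rw [Finset.sum_eq_single m]
  · simp
  · intro v _ hv
    rw [if_neg fun h => hv (hm v h)]
  · intro h
    simp [notMem_support_iff.mp h]

theorem comap_sigmaHom_span_le (a b : ℕ) :
    Ideal.comap sigmaHom (Ideal.span {X 0 ^ (2 * a + 1), X 1 ^ (2 * b + 1), X 0 * X 1}) ≤
      Ideal.span {X 0 ^ (a + 1), X 1 ^ (b + 1), X 2, X 0 * X 1} := by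
  intro f hf
  refine mem_span_X_pow_X_pow_X_X_mul_X_of_coeff_eq_zero fun m ha hb hc hab => ?_
  have hfiber : ∀ v, sigmaExponent v = sigmaExponent m → v = m := by
    intro v hv
    have h0 := congr($hv 0)
    have h1 := congr($hv 1)
    rw [sigmaExponent_apply_zero, sigmaExponent_apply_zero] at h0
    rw [sigmaExponent_apply_one, sigmaExponent_apply_one] at h1
    ext i
    fin_cases i <;> simp only [Fin.zero_eta, Fin.mk_one, Fin.reduceFinMk] <;> omega
  have h0 := sigmaExponent_apply_zero m
  have h1 := sigmaExponent_apply_one m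
  rw [← coeff_sigmaExponent_sigmaHom hfiber]
  exact coeff_eq_zero_of_mem_span_X_pow_X_pow_X_mul_X hf (by omega) (by omega) (by omega)

theorem span_le_comap_sigmaHom (p q : ℂ) (a b : ℕ) :
    Ideal.span {X 0 ^ (a + 1), X 1 ^ (b + 1), X 2, X 0 * X 1} ≤
      Ideal.comap sigmaHom (Ideal.span {C p * X 0 ^ (2 * a + 1) - C q * X 1 ^ (2 * b + 1),
        X 0 * X 1, X 0 ^ (2 * a + 2), X 1 ^ (2 * b + 2)}) := by
  have hxy : X 0 * X 1 ∈ Ideal.span ({C p * X 0 ^ (2 * a + 1) - C q * X 1 ^ (2 * b + 1),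
      X 0 * X 1, X 0 ^ (2 * a + 2), X 1 ^ (2 * b + 2)} : Set (MvPolynomial (Fin 2) ℂ)) :=
    Ideal.subset_span (by simp)
  simp only [Ideal.span_le, Set.insert_subset_iff, Set.singleton_subset_iff, SetLike.mem_coe,
    Ideal.mem_comap, map_mul, map_pow, sigmaHom_X, Matrix.cons_val_zero, Matrix.cons_val_one,
    Matrix.cons_val_two, Matrix.head_cons, Matrix.tail_cons]
  refine ⟨Ideal.subset_span ?_, Ideal.subset_span ?_, hxy, ?_⟩
  · simp [← pow_mul, mul_add]
  · simp [← pow_mul, mul_add]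
  · rw [show (X 0 ^ 2 * X 1 ^ 2 : MvPolynomial (Fin 2) ℂ) = (X 0 * X 1) * (X 0 * X 1) by ring]
    exact Ideal.mul_mem_left _ _ hxy

theorem stmt19_general (n k : ℕ) (hn : 1 ≤ n) (hk : k ≤ n - 1)
    (p q : ℂ) :
    Ideal.comap sigmaHom
      (Ideal.span ({C p * X 0 ^ (2 * k + 1) - C q * X 1 ^ (2 * n - 2 * k - 1), X 0 * X 1,
        X 0 ^ (2 * k + 2), X 1 ^ (2 * n - 2 * k)} : Set (MvPolynomial (Fin 2) ℂ))) =
    Ideal.span ({X 0 ^ (k + 1), X 1 ^ (n - k), X 2, X 0 * X 1} :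
      Set (MvPolynomial (Fin 3) ℂ)) := by
  obtain ⟨d, rfl⟩ : ∃ d, n = k + 1 + d := ⟨n - k - 1, by omega⟩
  rw [show 2 * (k + 1 + d) - 2 * k - 1 = 2 * d + 1 by omega,
    show 2 * (k + 1 + d) - 2 * k = 2 * d + 2 by omega, show k + 1 + d - k = d + 1 by omega]
  exact le_antisymm
    ((Ideal.comap_mono (span_le_span_X_pow_X_pow_X_mul_X p q k d)).trans
      (comap_sigmaHom_span_le k d))
    (span_le_comap_sigmaHom p q k d)

/-- For `n ≥ 1`, `0 ≤ k ≤ n-1` and `(p,q) ≠ (0,0)`,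
`σ⁻¹(⟨p·x^{2k+1} - q·y^{2n-2k-1}, xy, x^{2k+2}, y^{2n-2k}⟩) = ⟨a^{k+1}, b^{n-k}, c, ab⟩`;
in particular it does not depend on `(p,q)`. -/
theorem stmt19 (n k : ℕ) (hn : 1 ≤ n) (hk : k ≤ n - 1)
    (p q : ℂ) (hpq : (p, q) ≠ (0, 0)) :
    Ideal.comap sigmaHom
      (Ideal.span ({C p * X 0 ^ (2 * k + 1) - C q * X 1 ^ (2 * n - 2 * k - 1), X 0 * X 1,
        X 0 ^ (2 * k + 2), X 1 ^ (2 * n - 2 * k)} : Set (MvPolynomial (Fin 2) ℂ))) =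
    Ideal.span ({X 0 ^ (k + 1), X 1 ^ (n - k), X 2, X 0 * X 1} :
      Set (MvPolynomial (Fin 3) ℂ)) :=
  stmt19_general n k hn hk p q
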